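/- If L1 ⋠ L2, then there exists an LPTS C that is a counterexample: C ≼ L1 and C ⋠ L2. Moreover C can be chosen to be a stochastic tree (its start state is not in the support of any transition distribution and every other state is in the support of exactly one transition distribution). -/

import Mathlib

open Classical

structure FDist (S : Type) [Fintype S] where
  pmf : S → ℝ
  nonneg : ∀ s, 0 ≤ pmf s
  sum_one : ∑ s, pmf s = 1

namespace FDist

variable {S S1 S2 : Type} [Fintype S] [Fintype S1] [Fintype S2]

noncomputable def prob (μ : FDist S) (T : Set S) : ℝ :=
  ∑ s, if s ∈ T then μ.pmf s else 0

def supp (μ : FDist S) : Set S := {s | 0 < μ.pmf s}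

noncomputable def dirac (s : S) : FDist S where
  pmf t := if t = s then 1 else 0
  nonneg t := by (try dsimp only); split <;> norm_num
  sum_one := by simp

noncomputable def prod (μ1 : FDist S1) (μ2 : FDist S2) : FDist (S1 × S2) where
  pmf p := μ1.pmf p.1 * μ2.pmf p.2
  nonneg p := mul_nonneg (μ1.nonneg _) (μ2.nonneg _)
  sum_one := by
    rw [Fintype.sum_prod_type]
    simp_rw [← Finset.mul_sum, μ2.sum_one, mul_one]
    exact μ1.sum_one

end FDist

/-- Image of a set under a relation: `R(T) = {s2 | ∃ s1 ∈ T, (s1,s2) ∈ R}`. -/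
def relImage {S1 S2 : Type} (R : Set (S1 × S2)) (T : Set S1) : Set S2 :=
  {s2 | ∃ s1 ∈ T, (s1, s2) ∈ R}

/-- The lifting `μ1 ⊑_R μ2` of a relation on states to distributions,
via the Hall-type subset condition. -/
def liftRel {S1 S2 : Type} [Fintype S1] [Fintype S2]
    (R : Set (S1 × S2)) (μ1 : FDist S1) (μ2 : FDist S2) : Prop :=
  ∀ T ⊆ μ1.supp, μ1.prob T ≤ μ2.prob (relImage R T)

/-- A (finite, finitely-branching) labeled probabilistic transition system. -/
structure LPTS (S : Type) (Act : Type) [Fintype S] where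
  start : S
  alpha : Set Act
  trans : S → Act → Set (FDist S)
  trans_mem : ∀ s a μ, μ ∈ trans s a → a ∈ alpha
  finite_trans : ∀ s a, (trans s a).Finite

/-- `R` is a strong simulation between `L1` and `L2`. -/
def StrongSim {S1 S2 Act : Type} [Fintype S1] [Fintype S2]
    (L1 : LPTS S1 Act) (L2 : LPTS S2 Act) (R : Set (S1 × S2)) : Prop :=
  ∀ s1 s2, (s1, s2) ∈ R → ∀ a μ1, μ1 ∈ L1.trans s1 a →
    ∃ μ2 ∈ L2.trans s2 a, liftRel R μ1 μ2

/-- `L2` strongly simulates `L1` (written `L1 ≼ L2`). -/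
def Sim {S1 S2 Act : Type} [Fintype S1] [Fintype S2]
    (L1 : LPTS S1 Act) (L2 : LPTS S2 Act) : Prop :=
  ∃ R, StrongSim L1 L2 R ∧ (L1.start, L2.start) ∈ R

/-- A stochastic tree: the start state is not in the support of any transition
distribution, and every other state is in the support of exactly one transition
distribution. -/
def IsTree {S Act : Type} [Fintype S] (L : LPTS S Act) : Prop :=
  (∀ s a μ, μ ∈ L.trans s a → L.start ∉ μ.supp) ∧
  ∀ t : S, t ≠ L.start →
    ∃! tr : S × Act × FDist S, tr.2.2 ∈ L.trans tr.1 tr.2.1 ∧ t ∈ tr.2.2.supp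

/-!
Iterating the refinement step `R ↦ {(s, u) | every move of s is matched from u up to R}` from
the full relation reaches the coarsest simulation after finitely many steps, so `L1 ⋠ L2` means
that `(L1.start, L2.start)` drops out at some finite stage `k`. Whenever `(s, u)` drops out at
stage `j + 1`, some move `s -a→ μ` is matched by no move of `u` up to the stage-`j` relation;
unfolding these witnesses from the start state gives a tree of depth `k` whose nodes are labelled
by states of `L1`. The labelling is a simulation into `L1`, and by induction on the remaining
depth every simulation of the tree by `L2` relates a node only to states of `L2` that survive the
corresponding stage, so it cannot relate the root to `L2.start`.
-/

namespace FDist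

variable {S S' : Type} [Fintype S] [Fintype S']

theorem prob_mono (μ : FDist S) {T U : Set S} (h : T ⊆ U) : μ.prob T ≤ μ.prob U :=
  Finset.sum_le_sum fun s _ => by
    by_cases hs : s ∈ T
    · simp [hs, h hs]
    · simp only [hs, if_false]
      split_ifs <;> simp [μ.nonneg]

theorem pmf_eq_zero_of_notMem_supp (μ : FDist S) {s : S} (hs : s ∉ μ.supp) : μ.pmf s = 0 :=
  le_antisymm (not_lt.1 hs) (μ.nonneg s)

noncomputable def map (μ : FDist S) (g : S → S') : FDist S' where
  pmf t := ∑ s, if g s = t then μ.pmf s else 0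
  nonneg t := Finset.sum_nonneg fun s _ => by split_ifs <;> simp [μ.nonneg]
  sum_one := by rw [Finset.sum_comm]; simp [μ.sum_one]

theorem prob_map (μ : FDist S) (g : S → S') (T : Set S') :
    (μ.map g).prob T = μ.prob (g ⁻¹' T) := by
  simp only [prob, map, ← Finset.sum_filter, Set.mem_preimage]
  convert Finset.sum_fiberwise_eq_sum_filter _ _ g μ.pmf using 2
  simp

theorem supp_map (μ : FDist S) {g : S → S'} (hg : Function.Injective g) :
    (μ.map g).supp = g '' μ.supp := by
  ext t
  by_cases ht : t ∈ Set.range g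
  · obtain ⟨s, rfl⟩ := ht
    simp [supp, map, hg.eq_iff, hg.mem_set_image]
  · have : ∀ s, g s ≠ t := fun s h => ht ⟨s, h⟩
    simp [supp, map, this]

theorem sum_supp (μ : FDist S) {f : S → ℝ} (hf : ∀ s ∉ μ.supp, f s = 0) :
    ∑ s : μ.supp, f s = ∑ s, f s := by
  rw [Finset.sum_set_coe]
  exact Finset.sum_subset (Finset.subset_univ _) fun s _ hs => hf s (by simpa using hs)

noncomputable def toSupp (μ : FDist S) : FDist μ.supp where
  pmf s := μ.pmf s
  nonneg s := μ.nonneg s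
  sum_one := by rw [μ.sum_supp fun s => μ.pmf_eq_zero_of_notMem_supp, μ.sum_one]

theorem supp_toSupp (μ : FDist S) : μ.toSupp.supp = Set.univ :=
  Set.eq_univ_of_forall fun s => s.2

theorem prob_toSupp (μ : FDist S) (T : Set μ.supp) :
    μ.toSupp.prob T = μ.prob (Subtype.val '' T) := by
  rw [prob, prob, ← μ.sum_supp fun s hs => if_neg fun ⟨z, _, hz⟩ => hs (hz ▸ z.2)]
  simp only [Subtype.val_injective.mem_set_image]
  rfl

end FDist

section LiftRel

variable {S1 S2 S : Type} [Fintype S1] [Fintype S2] [Fintype S]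

theorem liftRel_mono {R R' : Set (S1 × S2)} (h : R ⊆ R') {μ1 : FDist S1} {μ2 : FDist S2}
    (hR : liftRel R μ1 μ2) : liftRel R' μ1 μ2 := fun T hT =>
  (hR T hT).trans (μ2.prob_mono fun _ ⟨s1, hs1, hs⟩ => ⟨s1, hs1, h hs⟩)

theorem liftRel_self {R : Set (S × S)} {μ : FDist S} (hR : ∀ s ∈ μ.supp, (s, s) ∈ R) :
    liftRel R μ μ := fun _ hT =>
  μ.prob_mono fun s hs => ⟨s, hs, hR s (hT hs)⟩

theorem liftRel_map_iff {g : S → S1} (hg : Function.Injective g) {R : Set (S1 × S2)}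
    {μ : FDist S} {ν : FDist S2} :
    liftRel R (μ.map g) ν ↔ liftRel {p | (g p.1, p.2) ∈ R} μ ν := by
  constructor
  · intro hR T hT
    have := hR (g '' T) (by rw [μ.supp_map hg]; exact Set.image_mono hT)
    rw [FDist.prob_map, hg.preimage_image] at this
    refine this.trans (ν.prob_mono ?_)
    rintro s2 ⟨_, ⟨s, hs, rfl⟩, h⟩
    exact ⟨s, hs, h⟩
  · intro hR T hT
    rw [FDist.prob_map]
    refine (hR _ fun s hs => ?_).trans (ν.prob_mono ?_)
    · obtain ⟨s', hs', hgs⟩ := (μ.supp_map hg ▸ hT) hs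
      exact hg hgs ▸ hs'
    · rintro s2 ⟨s, hs, h⟩
      exact ⟨g s, hs, h⟩

theorem liftRel_toSupp_iff {μ : FDist S} {R : Set (μ.supp × S2)} {ν : FDist S2} :
    liftRel R μ.toSupp ν ↔ liftRel {p | ∃ h : p.1 ∈ μ.supp, (⟨p.1, h⟩, p.2) ∈ R} μ ν := by
  constructor
  · intro hR T hT
    have := hR (Subtype.val ⁻¹' T) (by simp [FDist.supp_toSupp])
    rw [FDist.prob_toSupp, Set.image_preimage_eq_of_subset (by simpa using hT)] at this
    refine this.trans (ν.prob_mono ?_)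
    rintro s2 ⟨z, hz, h⟩
    exact ⟨z, hz, z.2, h⟩
  · intro hR T _
    rw [FDist.prob_toSupp]
    refine (hR _ (Set.image_subset_iff.2 fun z _ => z.2)).trans (ν.prob_mono ?_)
    rintro s2 ⟨_, ⟨z, hz, rfl⟩, _, h⟩
    exact ⟨z, hz, h⟩

end LiftRel

section Approx

variable {S1 S2 Act : Type} [Fintype S1] [Fintype S2] (L1 : LPTS S1 Act) (L2 : LPTS S2 Act)

def simStep (R : Set (S1 × S2)) : Set (S1 × S2) :=
  {p | ∀ a, ∀ μ1 ∈ L1.trans p.1 a, ∃ μ2 ∈ L2.trans p.2 a, liftRel R μ1 μ2}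

theorem strongSim_iff_subset_simStep {R : Set (S1 × S2)} :
    StrongSim L1 L2 R ↔ R ⊆ simStep L1 L2 R :=
  ⟨fun h p hp => h p.1 p.2 hp, fun h _ _ hs => h hs⟩

theorem simStep_mono : Monotone (simStep L1 L2) :=
  fun _ _ h _ hp a μ1 hμ1 =>
    let ⟨μ2, hμ2, hR⟩ := hp a μ1 hμ1
    ⟨μ2, hμ2, liftRel_mono h hR⟩

def simApprox (k : ℕ) : Set (S1 × S2) := (simStep L1 L2)^[k] Set.univ

theorem simApprox_succ (k : ℕ) : simApprox L1 L2 (k + 1) = simStep L1 L2 (simApprox L1 L2 k) :=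
  Function.iterate_succ_apply' _ _ _

theorem simApprox_antitone : Antitone (simApprox L1 L2) := by
  refine antitone_nat_of_succ_le fun k => ?_
  induction k with
  | zero => exact Set.subset_univ _
  | succ k ih =>
    simpa only [simApprox_succ] using simStep_mono L1 L2 ih

theorem exists_start_notMem_simApprox (h : ¬ Sim L1 L2) :
    ∃ k, (L1.start, L2.start) ∉ simApprox L1 L2 k := by
  obtain ⟨j, hj⟩ := WellFoundedLT.antitone_chain_condition (simApprox_antitone L1 L2)
  refine ⟨j, fun hmem => h ⟨simApprox L1 L2 j, ?_, hmem⟩⟩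
  rw [strongSim_iff_subset_simStep, ← simApprox_succ, ← hj (j + 1) j.le_succ]

def Unmatched (R : Set (S1 × S2)) (s : S1) (u : S2) : Prop :=
  ∃ a, ∃ μ1 ∈ L1.trans s a, ∀ μ2 ∈ L2.trans u a, ¬ liftRel R μ1 μ2

theorem unmatched_of_notMem_simStep {R : Set (S1 × S2)} {s : S1} {u : S2}
    (h : (s, u) ∉ simStep L1 L2 R) : Unmatched L1 L2 R s u := by
  simpa [simStep, Unmatched] using h

variable {L1 L2} {R : Set (S1 × S2)} {s : S1} {u : S2}

noncomputable def Unmatched.act (h : Unmatched L1 L2 R s u) : Act := h.choose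

noncomputable def Unmatched.dist (h : Unmatched L1 L2 R s u) : FDist S1 :=
  h.choose_spec.choose

theorem Unmatched.dist_mem (h : Unmatched L1 L2 R s u) : h.dist ∈ L1.trans s h.act :=
  h.choose_spec.choose_spec.1

theorem Unmatched.not_liftRel (h : Unmatched L1 L2 R s u) :
    ∀ μ2 ∈ L2.trans u h.act, ¬ liftRel R h.dist μ2 :=
  h.choose_spec.choose_spec.2

end Approx

section Tree

variable {S1 S2 Act : Type} [Fintype S1] [Fintype S2] (L1 : LPTS S1 Act) (L2 : LPTS S2 Act)
  (k : ℕ) (s : S1)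

def pathEnd : List (S2 × S1) → S1
  | [] => s
  | (_, t) :: _ => t

/-- Nodes of the counterexample tree are paths of steps `(u, t)`, most recent first: the step
from `p` to `(u, t) :: p` follows the witness that `pathEnd s p` is unmatched from `u` up to
stage `k - (p.length + 1)`. -/
def IsCexPath : List (S2 × S1) → Prop
  | [] => True
  | (u, t) :: p => IsCexPath p ∧ p.length < k ∧
      ∃ h : Unmatched L1 L2 (simApprox L1 L2 (k - (p.length + 1))) (pathEnd s p) u,
        t ∈ h.dist.supp

theorem IsCexPath.length_le : ∀ {p : List (S2 × S1)}, IsCexPath L1 L2 k s p → p.length ≤ k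
  | [], _ => Nat.zero_le _
  | _ :: _, ⟨_, hk, _⟩ => hk

def CexState : Type := {p : List (S2 × S1) // IsCexPath L1 L2 k s p}

instance : Finite (CexState L1 L2 k s) :=
  ((List.finite_length_le _ k).subset fun _ => IsCexPath.length_le L1 L2 k s).to_subtype

noncomputable instance : Fintype (CexState L1 L2 k s) := Fintype.ofFinite _

variable {L1 L2 k s} {u : S2} (p : CexState L1 L2 k s) (hk : p.1.length < k)
  (h : Unmatched L1 L2 (simApprox L1 L2 (k - (p.1.length + 1))) (pathEnd s p.1) u)

def CexState.child (t : h.dist.supp) : CexState L1 L2 k s :=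
  ⟨(u, t) :: p.1, p.2, hk, h, t.2⟩

theorem CexState.child_injective : Function.Injective (p.child hk h) := fun _ _ he =>
  Subtype.ext (by simpa [child] using congrArg Subtype.val he)

noncomputable def CexState.branch : FDist (CexState L1 L2 k s) :=
  h.dist.toSupp.map (p.child hk h)

theorem CexState.supp_branch : (p.branch hk h).supp = Set.range (p.child hk h) := by
  rw [branch, FDist.supp_map _ (p.child_injective hk h), FDist.supp_toSupp, Set.image_univ]

variable (L1 L2 k s)

noncomputable def cexTree : LPTS (CexState L1 L2 k s) Act where
  start := ⟨[], trivial⟩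
  alpha := Set.univ
  trans p a := {ν | ∃ u, ∃ (hk : p.1.length < k)
    (h : Unmatched L1 L2 (simApprox L1 L2 (k - (p.1.length + 1))) (pathEnd s p.1) u),
    h.act = a ∧ p.branch hk h = ν}
  trans_mem _ _ _ _ := Set.mem_univ _
  finite_trans p a := by
    refine (Set.finite_iUnion fun u => Set.Subsingleton.finite ?_).subset
      fun ν ⟨u, hν⟩ => Set.mem_iUnion.2 ⟨u, hν⟩
    rintro _ ⟨hk, h, -, rfl⟩ _ ⟨hk', h', -, rfl⟩
    rfl

theorem cexTree_strongSim : StrongSim (cexTree L1 L2 k s) L1 {q | pathEnd s q.1.1 = q.2} := by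
  rintro p _ (rfl : pathEnd s p.1 = _) a ν ⟨u, hk, h, rfl, rfl⟩
  refine ⟨h.dist, h.dist_mem, ?_⟩
  rw [CexState.branch, liftRel_map_iff (p.child_injective hk h), liftRel_toSupp_iff]
  exact liftRel_self fun t ht => ⟨ht, rfl⟩

theorem pathEnd_mem_simApprox_of_strongSim {Q : Set (CexState L1 L2 k s × S2)}
    (hQ : StrongSim (cexTree L1 L2 k s) L2 Q) :
    ∀ (j : ℕ) (p : CexState L1 L2 k s) (u : S2), p.1.length + j = k → (p, u) ∈ Q →
      (pathEnd s p.1, u) ∈ simApprox L1 L2 j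
  | 0, _, _, _, _ => Set.mem_univ _
  | j + 1, p, u, hj, hpu => by
    by_contra hnot
    rw [simApprox_succ] at hnot
    have hk : p.1.length < k := by omega
    have hlevel : k - (p.1.length + 1) = j := by omega
    have h := unmatched_of_notMem_simStep L1 L2 hnot
    rw [← hlevel] at h
    obtain ⟨μ2, hμ2, hlift⟩ := hQ p u hpu h.act _ ⟨u, hk, h, rfl, rfl⟩
    rw [CexState.branch, liftRel_map_iff (p.child_injective hk h), liftRel_toSupp_iff] at hlift
    refine h.not_liftRel μ2 hμ2 (liftRel_mono ?_ hlift)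
    rintro ⟨t, u'⟩ ⟨ht, hQ'⟩
    rw [hlevel]
    exact pathEnd_mem_simApprox_of_strongSim hQ j _ u' (by simp [CexState.child]; omega) hQ'

theorem cexTree_isTree : IsTree (cexTree L1 L2 k s) := by
  refine ⟨?_, ?_⟩
  · rintro p a _ ⟨u, hk, h, -, rfl⟩ hroot
    rw [CexState.supp_branch] at hroot
    obtain ⟨t, ht⟩ := hroot
    exact List.cons_ne_nil _ _ (congrArg Subtype.val ht)
  · rintro ⟨_ | ⟨⟨u, t⟩, p⟩, hpath⟩ hne
    · exact absurd rfl hne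
    obtain ⟨hp, hk, h, ht⟩ := hpath
    let parent : CexState L1 L2 k s := ⟨p, hp⟩
    refine ⟨(parent, h.act, parent.branch hk h), ⟨⟨u, hk, h, rfl, rfl⟩, ?_⟩, ?_⟩
    · show _ ∈ (parent.branch hk h).supp
      rw [CexState.supp_branch]
      exact ⟨⟨t, ht⟩, rfl⟩
    rintro ⟨q, a, ν⟩ ⟨hν, hmem⟩
    dsimp only at hν hmem
    obtain ⟨u', hk', h', rfl, rfl⟩ := hν
    rw [CexState.supp_branch] at hmem
    obtain ⟨t', he⟩ := hmem
    have := congrArg Subtype.val he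
    simp only [CexState.child, List.cons.injEq, Prod.mk.injEq] at this
    obtain ⟨⟨rfl, -⟩, hq⟩ := this
    obtain rfl : q = ⟨p, hp⟩ := Subtype.ext hq
    rfl

end Tree

/-- If `L1 ⋠ L2` then there is a counterexample, which can be chosen to be a
stochastic tree `C` with `C ≼ L1` and `C ⋠ L2`. -/
theorem tree_counterexample {S1 S2 Act : Type} [Fintype S1] [Fintype S2]
    (L1 : LPTS S1 Act) (L2 : LPTS S2 Act) (h : ¬ Sim L1 L2) :
    ∃ (T : Type) (i : Fintype T) (C : @LPTS T Act i),
      @IsTree T Act i C ∧ @Sim T S1 Act i _ C L1 ∧ ¬ @Sim T S2 Act i _ C L2 := by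
  obtain ⟨k, hk⟩ := exists_start_notMem_simApprox L1 L2 h
  refine ⟨CexState L1 L2 k L1.start, inferInstance, cexTree L1 L2 k L1.start,
    cexTree_isTree L1 L2 k L1.start, ⟨_, cexTree_strongSim L1 L2 k L1.start, rfl⟩, ?_⟩
  rintro ⟨Q, hQ, hroot⟩
  exact hk (pathEnd_mem_simApprox_of_strongSim L1 L2 k L1.start hQ k
    (cexTree L1 L2 k L1.start).start L2.start (zero_add k) hroot)
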